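/- arXiv:1805.06268 — 4 statements merged into one kernel-verified Lean document; each statement's English description precedes it below -/
import Mathlib

section
/- Let q ∈ ℂ, q ≠ 0, q² ≠ 1, and let (m_j) satisfy m_{j+1} = [2]m_j - m_{j-1} with [2] = q + q^{-1}, together with the quadratic relation m_1² - [2]m_0 m_1 + m_0² - 1 = 0. If m_k = m_0 for some integer k > 0 and q^k ≠ 1, then (2 - q^k - q^{-k})·m_0² = [k]², and hence m_0² = -[k/2]₊² in the sense that m_0² = [k]²/(2 - q^k - q^{-k}). -/
/-!
Since q ≠ q⁻¹, the recurrence has the closed form m_j = A q^j + B q^{-j}, and the quadratic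
relation says A B (q - q⁻¹)² = -1. If q^k ≠ 1, the period condition m_k = m_0 forces B = A q^k,
so m_0 = A (1 + q^k) and A² q^k (q - q⁻¹)² = -1; the claimed identity is then a rational identity
in A, q^k and q - q⁻¹.
-/

noncomputable def qint (q : ℂ) (n : ℤ) : ℂ := (q ^ n - q ^ (-n)) / (q - q⁻¹)

lemma qint_natCast (q : ℂ) (n : ℕ) : qint q n = (q ^ n - (q ^ n)⁻¹) / (q - q⁻¹) := by
  rw [qint, zpow_neg, zpow_natCast]

section TwoTermRecurrence

variable {K : Type*} [Field K] {q : K}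

lemma sub_inv_ne_zero_of_sq_ne_one (hq : q ≠ 0) (hq2 : q ^ 2 ≠ 1) : q - q⁻¹ ≠ 0 := by
  intro h
  exact hq2 (by linear_combination q * h + mul_inv_cancel₀ hq)

lemma mul_pow_add_mul_inv_pow_succ_succ (hq : q ≠ 0) (A B : K) (j : ℕ) :
    A * q ^ (j + 2) + B * q⁻¹ ^ (j + 2)
      = (q + q⁻¹) * (A * q ^ (j + 1) + B * q⁻¹ ^ (j + 1)) - (A * q ^ j + B * q⁻¹ ^ j) := by
  linear_combination -(A * q ^ j + B * q⁻¹ ^ j) * mul_inv_cancel₀ hq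

lemma exists_eq_mul_pow_add_mul_inv_pow {m : ℕ → K} (hd : q - q⁻¹ ≠ 0)
    (hrec : ∀ j, m (j + 2) = (q + q⁻¹) * m (j + 1) - m j) :
    ∃ A B : K, ∀ j, m j = A * q ^ j + B * q⁻¹ ^ j := by
  have hq : q ≠ 0 := by rintro rfl; simp at hd
  refine ⟨(m 1 - m 0 * q⁻¹) / (q - q⁻¹), (m 0 * q - m 1) / (q - q⁻¹), fun j => ?_⟩
  induction j using Nat.twoStepInduction with
  | zero =>
    rw [pow_zero, pow_zero, mul_one, mul_one, ← add_div, eq_div_iff hd]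
    ring
  | one =>
    rw [pow_one, pow_one, div_mul_eq_mul_div, div_mul_eq_mul_div, ← add_div,
      eq_div_iff hd]
    ring
  | more n ih₁ ih₂ => rw [hrec n, ih₂, ih₁, mul_pow_add_mul_inv_pow_succ_succ hq]

lemma quadratic_invariant_eq (hq : q ≠ 0) (A B : K) :
    (A * q + B * q⁻¹) ^ 2 - (q + q⁻¹) * (A + B) * (A * q + B * q⁻¹) + (A + B) ^ 2
      = -(A * B * (q - q⁻¹) ^ 2) := by
  linear_combination -(A + B) ^ 2 * mul_inv_cancel₀ hq

lemma eq_mul_of_mul_add_mul_inv_eq {c : K} (hc0 : c ≠ 0) (hc : c ≠ 1) {A B : K}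
    (h : A * c + B * c⁻¹ = A + B) : B = A * c := by
  have : (A * c - B) * (c - 1) = 0 := by
    linear_combination c * h - B * mul_inv_cancel₀ hc0
  rcases mul_eq_zero.mp this with h' | h'
  · linear_combination -h'
  · exact absurd (sub_eq_zero.mp h') hc

lemma sub_sub_inv_mul_sq_eq {c d A : K} (hc : c ≠ 0) (hd : d ≠ 0)
    (h : A ^ 2 * c * d ^ 2 = -1) :
    (2 - c - c⁻¹) * (A * (1 + c)) ^ 2 = ((c - c⁻¹) / d) ^ 2 := by
  field_simp
  linear_combination (c * (2 - c) - 1) * (1 + c) ^ 2 * h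

end TwoTermRecurrence

theorem period_implies_general (q : ℂ) (hq : q ≠ 0) (hq2 : q ^ 2 ≠ 1)
    (m : ℕ → ℂ)
    (hquad : m 1 ^ 2 - (q + q⁻¹) * m 0 * m 1 + m 0 ^ 2 - 1 = 0)
    (hrec : ∀ j : ℕ, m (j + 2) = (q + q⁻¹) * m (j + 1) - m j)
    (k : ℕ) (hper : m k = m 0) (hqk : q ^ k ≠ 1) :
    (2 - q ^ k - (q ^ k)⁻¹) * m 0 ^ 2 = qint q k ^ 2 := by
  have hd := sub_inv_ne_zero_of_sq_ne_one hq hq2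
  obtain ⟨A, B, hm⟩ := exists_eq_mul_pow_add_mul_inv_pow hd hrec
  have hm0 : m 0 = A + B := by simpa using hm 0
  have hB : B = A * q ^ k := by
    apply eq_mul_of_mul_add_mul_inv_eq (pow_ne_zero k hq) hqk
    rw [← inv_pow, ← hm, ← hm0, hper]
  have hAB : A * B * (q - q⁻¹) ^ 2 = -1 := by
    rw [hm0, show m 1 = A * q + B * q⁻¹ by simpa using hm 1] at hquad
    linear_combination -hquad + quadratic_invariant_eq hq A B
  rw [hm0, hB, show A + A * q ^ k = A * (1 + q ^ k) by ring, qint_natCast]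
  exact sub_sub_inv_mul_sq_eq (pow_ne_zero k hq) hd (by rw [← hAB, hB]; ring)

theorem period_implies (q : ℂ) (hq : q ≠ 0) (hq2 : q ^ 2 ≠ 1)
    (m : ℕ → ℂ)
    (hquad : m 1 ^ 2 - (q + q⁻¹) * m 0 * m 1 + m 0 ^ 2 - 1 = 0)
    (hrec : ∀ j : ℕ, m (j + 2) = (q + q⁻¹) * m (j + 1) - m j)
    (k : ℕ) (hk : 0 < k) (hper : m k = m 0) (hqk : q ^ k ≠ 1) :
    (2 - q ^ k - (q ^ k)⁻¹) * m 0 ^ 2 = qint q k ^ 2 :=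
  period_implies_general q hq hq2 m hquad hrec k hper hqk
end

section
/- Let A be a unital ℂ-algebra with elements B₁, B₂ satisfying B₁²B₂ - [2]B₁B₂B₁ + B₂B₁² = B₂ and B₂²B₁ - [2]B₂B₁B₂ + B₁B₂² = B₁ (with [2] = q + q^{-1}, q ≠ 0, q² ≠ ±1). Let V be an A-module and v ∈ V with B₁v = μv. If μ ≠ ±2i/(q - q^{-1}), then B₂v is a sum of two eigenvectors of B₁ with eigenvalues μ₊ and μ₋, the two roots of x² - [2]μx + μ² - 1 = 0 (the roots being distinct under this hypothesis). -/
private lemma aux_sum {V : Type*} [AddCommGroup V] [Module ℂ V]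
    (x y : V) (μp μm : ℂ) :
    x - μm • y + (μp • y - x) = (μp - μm) • y := by module

private lemma aux_key {V : Type*} [AddCommGroup V] [Module ℂ V]
    (x y : V) (c μ : ℂ) :
    y + c • x - (μ * μ) • y = c • x - (μ ^ 2 - 1) • y := by module

private lemma aux_eig1 {V : Type*} [AddCommGroup V] [Module ℂ V]
    (x y : V) (c μp μm : ℂ) :
    c • ((μp + μm) • x - (μp * μm) • y - μm • x) = μp • (c • (x - μm • y)) := by
  module

private lemma aux_eig2 {V : Type*} [AddCommGroup V] [Module ℂ V]
    (x y : V) (c μp μm : ℂ) :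
    c • (μp • x - ((μp + μm) • x - (μp * μm) • y)) = μm • (c • (μp • y - x)) := by
  module

theorem weight_vector_decomposition {A : Type*} [Ring A] [Algebra ℂ A]
    {V : Type*} [AddCommGroup V] [Module ℂ V] [Module A V] [IsScalarTower ℂ A V]
    (q : ℂ) (hq : q ≠ 0) (hq2 : q ^ 2 ≠ 1)
    (B₁ B₂ : A)
    (hrel1 : B₁ * B₁ * B₂ - (q + q⁻¹) • (B₁ * B₂ * B₁) + B₂ * (B₁ * B₁) = B₂)
    (hrel2 : B₂ * B₂ * B₁ - (q + q⁻¹) • (B₂ * B₁ * B₂) + B₁ * (B₂ * B₂) = B₁)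
    (v : V) (μ : ℂ) (hv : B₁ • v = μ • v)
    (hμ1 : μ ≠ 2 * Complex.I / (q - q⁻¹)) (hμ2 : μ ≠ -(2 * Complex.I / (q - q⁻¹))) :
    ∃ μp μm : ℂ, ∃ w₁ w₂ : V,
      μp + μm = (q + q⁻¹) * μ ∧ μp * μm = μ ^ 2 - 1 ∧ μp ≠ μm ∧
      B₂ • v = w₁ + w₂ ∧ B₁ • w₁ = μp • w₁ ∧ B₁ • w₂ = μm • w₂ := by
  have hcomm : ∀ (c : ℂ) (a : A) (x : V), a • (c • x) = c • (a • x) := by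
    intro c a x
    rw [← algebraMap_smul A c x, ← mul_smul, ← Algebra.commutes, mul_smul,
      algebraMap_smul]
  have hqq : q * q⁻¹ = 1 := mul_inv_cancel₀ hq
  have hs : q - q⁻¹ ≠ 0 := by
    intro h
    apply hq2
    have h2 : q * (q - q⁻¹) = q ^ 2 - 1 := by field_simp
    rw [h, mul_zero] at h2
    linear_combination -h2
  obtain ⟨d, hd⟩ := IsAlgClosed.exists_pow_nat_eq ((q - q⁻¹) ^ 2 * μ ^ 2 + 4)
    (by norm_num : 0 < 2)
  have hd0 : d ≠ 0 := by
    intro h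
    rw [h] at hd
    have hdisc : (q - q⁻¹) ^ 2 * μ ^ 2 + 4 = 0 := by
      rw [← hd]; ring
    have hfac : ((q - q⁻¹) * μ - 2 * Complex.I) * ((q - q⁻¹) * μ + 2 * Complex.I) = 0 := by
      linear_combination hdisc - 4 * Complex.I_sq
    rcases mul_eq_zero.mp hfac with h1 | h1
    · apply hμ1
      rw [eq_div_iff hs]
      linear_combination h1
    · apply hμ2
      rw [← neg_div, eq_div_iff hs]
      linear_combination h1
  set μp : ℂ := ((q + q⁻¹) * μ + d) / 2 with hμp
  set μm : ℂ := ((q + q⁻¹) * μ - d) / 2 with hμm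
  have hsum : μp + μm = (q + q⁻¹) * μ := by rw [hμp, hμm]; ring
  have hprod : μp * μm = μ ^ 2 - 1 := by
    have h4 : μp * μm = (((q + q⁻¹) * μ) ^ 2 - d ^ 2) / 4 := by rw [hμp, hμm]; ring
    rw [h4, hd]
    linear_combination μ ^ 2 * hqq
  have hne : μp ≠ μm := by
    intro h
    apply hd0
    have h5 : μp - μm = d := by rw [hμp, hμm]; ring
    rw [h, sub_self] at h5
    exact h5.symm
  set u : V := B₂ • v with hu
  have h := congrArg (fun a : A => a • v) hrel1
  rw [add_smul, sub_smul] at h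
  have e1 : (B₁ * B₁ * B₂) • v = B₁ • B₁ • u := by rw [mul_smul, mul_smul]
  have e2 : ((q + q⁻¹) • (B₁ * B₂ * B₁)) • v = ((q + q⁻¹) * μ) • (B₁ • u) := by
    rw [smul_assoc, mul_smul, mul_smul, hv, hcomm, hcomm, smul_smul]
  have e3 : (B₂ * (B₁ * B₁)) • v = (μ * μ) • u := by
    rw [mul_smul, mul_smul, hv, hcomm, hv, smul_smul, hcomm]
  rw [e1, e2, e3, ← hu] at h
  have key : B₁ • B₁ • u = ((q + q⁻¹) * μ) • (B₁ • u) - (μ ^ 2 - 1) • u := by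
    have h6 : B₁ • B₁ • u = u + ((q + q⁻¹) * μ) • (B₁ • u) - (μ * μ) • u := by
      rw [sub_add_eq_add_sub, sub_eq_iff_eq_add] at h
      rw [← sub_eq_iff_eq_add'] at h
      rw [← h]; abel
    rw [h6]
    exact aux_key (B₁ • u) u _ μ
  refine ⟨μp, μm, (μp - μm)⁻¹ • (B₁ • u - μm • u), (μp - μm)⁻¹ • (μp • u - B₁ • u),
    hsum, hprod, hne, ?_, ?_, ?_⟩
  · rw [← smul_add, aux_sum, smul_smul, inv_mul_cancel₀ (sub_ne_zero.mpr hne),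
      one_smul, hu]
  · rw [hcomm, smul_sub, hcomm, key, ← hsum, ← hprod]
    exact aux_eig1 (B₁ • u) u _ μp μm
  · rw [hcomm, smul_sub, hcomm, key, ← hsum, ← hprod]
    exact aux_eig2 (B₁ • u) u _ μp μm
end

section
/- Let q ∈ ℂ, q not a root of unity, and let (m_j)_{j∈ℤ} be a sequence with m_{j+1} = [2]m_j - m_{j-1} and m_1² - [2]m_0m_1 + m_0² - 1 = 0. Suppose α_{j,j+1} = (m_0m_{-1} - m_jm_{j+1})/((m_{j-1} - m_{j+1})(m_{j-2} - m_j)) is well defined and equals 0 with j = 2k even. Then m_k = 0 or m_k = ±2i/(q - q^{-1}). -/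
/-!
Every solution of `m (j + 1) = (q + q⁻¹) * m j - m (j - 1)` has the form
`m j = A q^j + B q^(-j)`, and the quadratic relation becomes `A B (q - q⁻¹)² = -1`. In these
coordinates the numerator of `α_{2k,2k+1}` factors as
`(q⁻¹ - q^(4k+1)) q^(-2k) (A q^k - B q^(-k)) m_k`, whose first factors vanish only at roots of
unity. So either `m_k = 0`, or `A q^k = B q^(-k)` and then
`m_k² = m_k² - (A q^k - B q^(-k))² = 4 A B = -4 / (q - q⁻¹)²`.
-/

theorem eq_of_recurrence_of_eq_zero_one {R : Type*} [CommRing R] (c : R) {m f : ℤ → R}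
    (hm : ∀ j, m (j + 1) = c * m j - m (j - 1)) (hf : ∀ j, f (j + 1) = c * f j - f (j - 1))
    (h0 : m 0 = f 0) (h1 : m 1 = f 1) : m = f := by
  suffices h : ∀ j : ℤ, m j = f j ∧ m (j + 1) = f (j + 1) from funext fun j => (h j).1
  intro j
  induction j using Int.induction_on with
  | zero => exact ⟨h0, by simpa using h1⟩
  | succ i ih =>
    refine ⟨ih.2, ?_⟩
    rw [hm, hf, add_sub_cancel_right, ih.1, ih.2]
  | pred i ih =>
    have hm' := hm (-i)
    have hf' := hf (-i)
    rw [sub_add_cancel]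
    refine ⟨?_, ih.1⟩
    linear_combination hm' - hf' + c * ih.1 - ih.2

section ClosedForm

variable {K : Type*} [Field K] {q : K}

theorem zpow_sub_zpow_ne_zero (hq : q ≠ 0) {a b : ℤ} (h : q ^ (a - b) ≠ 1) :
    q ^ a - q ^ b ≠ 0 := by
  rw [sub_ne_zero]
  contrapose! h
  rw [zpow_sub₀ hq, h, div_self (zpow_ne_zero b hq)]

theorem mul_zpow_add_mul_zpow_neg_recurrence (hq : q ≠ 0) (A B : K) (j : ℤ) :
    A * q ^ (j + 1) + B * q ^ (-(j + 1))
      = (q + q⁻¹) * (A * q ^ j + B * q ^ (-j)) - (A * q ^ (j - 1) + B * q ^ (-(j - 1))) := by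
  simp only [neg_add, neg_sub, zpow_add₀ hq, zpow_sub₀ hq, zpow_neg, zpow_one]
  field_simp
  ring

theorem exists_eq_mul_zpow_add_mul_zpow_neg (hq : q - q⁻¹ ≠ 0) {m : ℤ → K}
    (hm : ∀ j, m (j + 1) = (q + q⁻¹) * m j - m (j - 1)) :
    ∃ A B : K, ∀ j, m j = A * q ^ j + B * q ^ (-j) := by
  have hq0 : q ≠ 0 := by rintro rfl; simp at hq
  refine ⟨(m 1 - m 0 * q⁻¹) / (q - q⁻¹), (q * m 0 - m 1) / (q - q⁻¹), fun j => ?_⟩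
  refine congrFun (eq_of_recurrence_of_eq_zero_one _ hm (f := fun j => _ * q ^ j + _ * q ^ (-j))
    (mul_zpow_add_mul_zpow_neg_recurrence hq0 _ _) ?_ ?_) j
  · rw [neg_zero, zpow_zero, mul_one, mul_one, ← add_div, eq_div_iff hq]
    ring
  · rw [zpow_one, zpow_neg, zpow_one, div_mul_eq_mul_div, div_mul_eq_mul_div, ← add_div,
      eq_div_iff hq]
    field_simp
    ring

variable {A B : K} {m : ℤ → K}

theorem sq_sub_mul_add_sq_eq_of_closed_form (hq : q ≠ 0)
    (hm : ∀ j, m j = A * q ^ j + B * q ^ (-j)) :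
    m 1 ^ 2 - (q + q⁻¹) * m 0 * m 1 + m 0 ^ 2 = -(A * B * (q - q⁻¹) ^ 2) := by
  simp only [hm, zpow_zero, zpow_one, zpow_neg]
  field_simp
  ring

theorem sq_sub_sq_eq_of_closed_form (hq : q ≠ 0) (hm : ∀ j, m j = A * q ^ j + B * q ^ (-j))
    (k : ℤ) :
    m k ^ 2 - (A * q ^ k - B * q ^ (-k)) ^ 2 = 4 * A * B := by
  simp only [hm, zpow_neg]
  field_simp [zpow_ne_zero k hq]
  ring

theorem alpha_numerator_eq_of_closed_form (hq : q ≠ 0) (hm : ∀ j, m j = A * q ^ j + B * q ^ (-j))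
    (k : ℤ) :
    m 0 * m (-1) - m (2 * k) * m (2 * k + 1)
      = (q ^ (-1 : ℤ) - q ^ (4 * k + 1)) * q ^ (-(2 * k)) * (A * q ^ k - B * q ^ (-k)) * m k := by
  have h2 : q ^ (2 * k) = q ^ k * q ^ k := by rw [two_mul, zpow_add₀ hq]
  have h4 : q ^ (4 * k) = q ^ k * q ^ k * q ^ k * q ^ k := by
    rw [show 4 * k = k + k + k + k by ring, zpow_add₀ hq, zpow_add₀ hq, zpow_add₀ hq]
  simp only [hm, zpow_zero, zpow_neg, zpow_add₀ hq, zpow_one, h2, h4, neg_neg]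
  field_simp [zpow_ne_zero k hq]
  ring

end ClosedForm

theorem eq_two_mul_I_div_or_eq_neg_of_sq_mul_sq {x d : ℂ} (hd : d ≠ 0) (h : x ^ 2 * d ^ 2 = -4) :
    x = 2 * Complex.I / d ∨ x = -(2 * Complex.I / d) := by
  have hsq : (x * d) ^ 2 = (2 * Complex.I) ^ 2 := by linear_combination h - 4 * Complex.I_sq
  rw [← neg_div, eq_div_iff hd, eq_div_iff hd]
  exact sq_eq_sq_iff_eq_or_eq_neg.mp hsq

theorem alpha_zero_even_general (q : ℂ) (hq : q ≠ 0)
    (hroot : ∀ n : ℤ, n ≠ 0 → q ^ n ≠ 1)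
    (m : ℤ → ℂ)
    (hquad : m 1 ^ 2 - (q + q⁻¹) * m 0 * m 1 + m 0 ^ 2 - 1 = 0)
    (hrec : ∀ j : ℤ, m (j + 1) = (q + q⁻¹) * m j - m (j - 1))
    (k : ℤ)
    (hnum : m 0 * m (-1) - m (2 * k) * m (2 * k + 1) = 0) :
    m k = 0 ∨ m k = 2 * Complex.I / (q - q⁻¹) ∨ m k = -(2 * Complex.I / (q - q⁻¹)) := by
  have hq2 : q - q⁻¹ ≠ 0 := by
    simpa using zpow_sub_zpow_ne_zero hq (a := 1) (b := -1) (hroot _ (by norm_num))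
  obtain ⟨A, B, hm⟩ := exists_eq_mul_zpow_add_mul_zpow_neg hq2 hrec
  have hAB : A * B * (q - q⁻¹) ^ 2 = -1 := by
    linear_combination sq_sub_mul_add_sq_eq_of_closed_form hq hm - hquad
  have hfactor : (q ^ (-1 : ℤ) - q ^ (4 * k + 1)) * q ^ (-(2 * k)) ≠ 0 :=
    mul_ne_zero (zpow_sub_zpow_ne_zero hq (hroot _ (by omega))) (zpow_ne_zero _ hq)
  rw [alpha_numerator_eq_of_closed_form hq hm, mul_eq_zero, mul_eq_zero,
    or_iff_right hfactor] at hnum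
  rcases hnum with hdual | hzero
  · right
    apply eq_two_mul_I_div_or_eq_neg_of_sq_mul_sq hq2
    linear_combination (q - q⁻¹) ^ 2 * sq_sub_sq_eq_of_closed_form hq hm k + 4 * hAB
      + (q - q⁻¹) ^ 2 * (A * q ^ k - B * q ^ (-k)) * hdual
  · exact Or.inl hzero

theorem alpha_zero_even (q : ℂ) (hq : q ≠ 0)
    (hroot : ∀ n : ℤ, n ≠ 0 → q ^ n ≠ 1)
    (m : ℤ → ℂ)
    (hquad : m 1 ^ 2 - (q + q⁻¹) * m 0 * m 1 + m 0 ^ 2 - 1 = 0)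
    (hrec : ∀ j : ℤ, m (j + 1) = (q + q⁻¹) * m j - m (j - 1))
    (k : ℤ) (hk : 0 ≤ k)
    (hden : (m (2 * k - 1) - m (2 * k + 1)) * (m (2 * k - 2) - m (2 * k)) ≠ 0)
    (hnum : m 0 * m (-1) - m (2 * k) * m (2 * k + 1) = 0) :
    m k = 0 ∨ m k = 2 * Complex.I / (q - q⁻¹) ∨ m k = -(2 * Complex.I / (q - q⁻¹)) :=
  alpha_zero_even_general q hq hroot m hquad hrec k hnum
end

section
/- Let q ∈ ℂ, q ≠ 0, q² ≠ 1, and let u₁, u₂ be invertible elements of a ℂ-algebra with u₁u₂ = q·u₂u₁. Set b_j = ±i(u_j + u_j^{-1})/(q - q^{-1}) for j = 1, 2 (same sign for both). Then b₁²b₂ - [2]b₁b₂b₁ + b₂b₁² = b₂, where [2] = q + q^{-1}. -/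
/-!
If `u y = c y u`, then `u² y - t u y u + y u² = (c² - t c + 1) y u²`, which vanishes for
`t = c + c⁻¹`; the same holds for `u⁻¹`, which `c⁻¹`-commutes with `y`. So for `X = u + u⁻¹` only
the cross terms survive, and conjugation by `u` scales `y` by `c`:
`4 y - t (u y u⁻¹ + u⁻¹ y u) = (4 - t²) y = -(c - c⁻¹)² y`. With `u = u₁` and `y = u₂^{±1}`
(so `c = q^{±1}`) this gives `X₁² X₂ - [2] X₁ X₂ X₁ + X₂ X₁² = -(q - q⁻¹)² X₂`. Finally
`b_j = c X_j` with `c = ε i / (q - q⁻¹)`, and `c² (q - q⁻¹)² = ε² i² = -1` turns the factor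
`c³ · (-(q - q⁻¹)²)` into `c`.
-/

section QSerre

variable {K A : Type*} [Field K] [Ring A] [Algebra K A]

def qSerre (t : K) (x y : A) : A :=
  x * x * y - t • (x * y * x) + y * (x * x)

theorem qSerre_add_right (t : K) (x y z : A) :
    qSerre t x (y + z) = qSerre t x y + qSerre t x z := by
  simp only [qSerre, mul_add, add_mul, smul_add]
  abel

theorem qSerre_smul_smul (t a b : K) (x y : A) :
    qSerre t (a • x) (b • y) = (a * a * b) • qSerre t x y := by
  simp only [qSerre, smul_mul_assoc, mul_smul_comm, smul_smul, smul_sub, smul_add]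
  module

theorem qSerre_eq_zero_of_mul_eq_smul_mul {c : K} (hc : c ≠ 0) {x y : A}
    (h : x * y = c • (y * x)) : qSerre (c + c⁻¹) x y = 0 := by
  have hxyx : x * y * x = c • (y * (x * x)) := by rw [h, smul_mul_assoc, mul_assoc]
  have hxxy : x * x * y = (c * c) • (y * (x * x)) := by
    rw [mul_assoc, h, mul_smul_comm, ← mul_assoc, h, smul_mul_assoc, smul_smul, mul_assoc]
  rw [qSerre, hxyx, hxxy, smul_smul]
  match_scalars
  field_simp
  ring

theorem mul_eq_inv_smul_mul_of_mul_eq_smul_mul {c : K} (hc : c ≠ 0) {x y : A}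
    (h : x * y = c • (y * x)) : y * x = c⁻¹ • (x * y) := by
  rw [h, smul_smul, inv_mul_cancel₀ hc, one_smul]

theorem Units.inv_mul_eq_smul_mul_inv_of_mul_eq_smul_mul {c : K} (v : Aˣ) {x : A}
    (h : x * v = c • (v * x)) : (↑v⁻¹ : A) * x = c • (x * ↑v⁻¹) := by
  calc (↑v⁻¹ : A) * x = ↑v⁻¹ * (x * v) * ↑v⁻¹ := by
        rw [mul_assoc, Units.mul_inv_cancel_right]
    _ = c • (x * ↑v⁻¹) := by
        rw [h, mul_smul_comm, Units.inv_mul_cancel_left, smul_mul_assoc]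

theorem qSerre_units_add_inv (t : K) (u : Aˣ) (y : A) :
    qSerre t ((u : A) + ↑u⁻¹) y =
      qSerre t (u : A) y + qSerre t (↑u⁻¹ : A) y + (4 : K) • y
        - t • ((u : A) * y * ↑u⁻¹ + ↑u⁻¹ * y * u) := by
  simp only [qSerre, mul_add, add_mul, smul_add, mul_assoc, Units.mul_inv, Units.inv_mul,
    mul_one, one_mul]
  module

theorem qSerre_units_add_inv_of_mul_eq_smul_mul {c : K} (hc : c ≠ 0) (u : Aˣ) {y : A}
    (h : (u : A) * y = c • (y * u)) :
    qSerre (c + c⁻¹) ((u : A) + ↑u⁻¹) y = -(c - c⁻¹) ^ 2 • y := by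
  have h' : (↑u⁻¹ : A) * y = c⁻¹ • (y * ↑u⁻¹) :=
    u.inv_mul_eq_smul_mul_inv_of_mul_eq_smul_mul (mul_eq_inv_smul_mul_of_mul_eq_smul_mul hc h)
  have hinv : qSerre (c + c⁻¹) (↑u⁻¹ : A) y = 0 := by
    simpa only [inv_inv, add_comm] using qSerre_eq_zero_of_mul_eq_smul_mul (inv_ne_zero hc) h'
  have hconj : (u : A) * y * ↑u⁻¹ = c • y := by
    rw [h, smul_mul_assoc, Units.mul_inv_cancel_right]
  have hconj' : (↑u⁻¹ : A) * y * u = c⁻¹ • y := by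
    rw [h', smul_mul_assoc, Units.inv_mul_cancel_right]
  rw [qSerre_units_add_inv, qSerre_eq_zero_of_mul_eq_smul_mul hc h, hinv, hconj, hconj']
  match_scalars
  field_simp
  ring

end QSerre

theorem qtorus_relation1 {A : Type*} [Ring A] [Algebra ℂ A]
    (q : ℂ) (hq : q ≠ 0) (hq2 : q ^ 2 ≠ 1)
    (u₁ u₂ : Aˣ) (hcomm : (u₁ : A) * u₂ = q • ((u₂ : A) * u₁))
    (ε : ℂ) (hε : ε = 1 ∨ ε = -1)
    (b₁ b₂ : A)
    (hb₁ : b₁ = (ε * Complex.I / (q - q⁻¹)) • ((u₁ : A) + (↑u₁⁻¹ : A)))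
    (hb₂ : b₂ = (ε * Complex.I / (q - q⁻¹)) • ((u₂ : A) + (↑u₂⁻¹ : A))) :
    b₁ * b₁ * b₂ - (q + q⁻¹) • (b₁ * b₂ * b₁) + b₂ * (b₁ * b₁) = b₂ := by
  have hqq : q - q⁻¹ ≠ 0 := by
    intro h
    apply hq2
    field_simp at h
    linear_combination h
  have hcomm' : (u₁ : A) * ↑u₂⁻¹ = q⁻¹ • ((↑u₂⁻¹ : A) * u₁) :=
    mul_eq_inv_smul_mul_of_mul_eq_smul_mul hq (u₂.inv_mul_eq_smul_mul_inv_of_mul_eq_smul_mul hcomm)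
  have hXY : qSerre (q + q⁻¹) ((u₁ : A) + ↑u₁⁻¹) ((u₂ : A) + ↑u₂⁻¹)
      = -(q - q⁻¹) ^ 2 • ((u₂ : A) + ↑u₂⁻¹) := by
    have h₂ := qSerre_units_add_inv_of_mul_eq_smul_mul (inv_ne_zero hq) u₁ hcomm'
    rw [inv_inv, add_comm q⁻¹] at h₂
    rw [qSerre_add_right, qSerre_units_add_inv_of_mul_eq_smul_mul hq u₁ hcomm, h₂, smul_add]
    congr 2
    ring
  have hε2 : ε ^ 2 = 1 := by rcases hε with rfl | rfl <;> norm_num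
  change qSerre (q + q⁻¹) b₁ b₂ = b₂
  rw [hb₁, hb₂, qSerre_smul_smul, hXY, smul_smul]
  have hc : (ε * Complex.I / (q - q⁻¹)) ^ 2 * (q - q⁻¹) ^ 2 = -1 := by
    rw [div_pow, mul_pow, hε2, Complex.I_sq]
    field_simp
  congr 1
  linear_combination (-(ε * Complex.I / (q - q⁻¹))) * hc
end
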